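/- Let G be a graph on [n] and v a vertex. Then J_G = J_{G_v} ∩ ((x_v, y_v) + J_{G−v}), where G_v is obtained from G by completing the neighborhood of v. -/

import Mathlib

open SimpleGraph

def completeNeighborhood {V : Type} (G : SimpleGraph V) (v : V) : SimpleGraph V where
  Adj u w := G.Adj u w ∨ (u ≠ w ∧ G.Adj v u ∧ G.Adj v w)
  symm := by
    refine ⟨fun a b h => ?_⟩
    rcases h with h | ⟨h1, h2, h3⟩
    · exact Or.inl h.symm
    · exact Or.inr ⟨h1.symm, h3, h2⟩
  loopless := by
    refine ⟨fun a h => ?_⟩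
    rcases h with h | ⟨h, -⟩
    · exact G.irrefl h
    · exact h rfl

abbrev deleteVert {V : Type} (G : SimpleGraph V) (x : V) :
    SimpleGraph ({x}ᶜ : Set V) :=
  G.induce ({x}ᶜ : Set V)

def IsSimplicial {V : Type} (G : SimpleGraph V) (v : V) : Prop :=
  G.IsClique (G.neighborSet v)

noncomputable def fval {V : Type} (G : SimpleGraph V) : ℕ :=
  {v | IsSimplicial G v}.ncard

noncomputable def ivval {V : Type} (G : SimpleGraph V) : ℕ :=
  {v | ¬ IsSimplicial G v}.ncard

noncomputable def dval {V : Type} (G : SimpleGraph V) : ℕ :=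
  {v | ∀ u, ¬ G.Adj v u}.ncard +
    ∑ᶠ c : G.ConnectedComponent, (G.induce c.supp).diam

open SimpleGraph MvPolynomial

noncomputable section

abbrev PolyS (K : Type) [Field K] (n : ℕ) : Type := MvPolynomial (Fin n ⊕ Fin n) K

def xv {K : Type} [Field K] {n : ℕ} (i : Fin n) : PolyS K n := X (Sum.inl i)
def yv {K : Type} [Field K] {n : ℕ} (i : Fin n) : PolyS K n := X (Sum.inr i)

/-- The binomial `x_i y_j - x_j y_i`. -/
def fij {K : Type} [Field K] {n : ℕ} (i j : Fin n) : PolyS K n :=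
  xv i * yv j - xv j * yv i

/-- The ideal generated by the binomials `f_{ij}` for all pairs related by `r`. -/
def relIdeal (K : Type) [Field K] {n : ℕ} (r : Fin n → Fin n → Prop) :
    Ideal (PolyS K n) :=
  Ideal.span {g | ∃ i j, r i j ∧ g = fij i j}

/-- The binomial edge ideal of a graph `G` on `[n]`. -/
def beIdeal (K : Type) [Field K] {n : ℕ} (G : SimpleGraph (Fin n)) :
    Ideal (PolyS K n) :=
  relIdeal K G.Adj

/-- Depth of a ring with respect to an ideal `I`: the supremum of lengths of
regular sequences consisting of elements of `I`. -/
def ringDepth (R : Type) [CommRing R] (I : Ideal R) : ℕ :=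
  sSup {k | ∃ rs : List R, rs.length = k ∧ (∀ r ∈ rs, r ∈ I) ∧
    RingTheory.Sequence.IsRegular R rs}

/-- The depth of `S/J_G` with respect to the maximal homogeneous ideal. -/
def beDepth (K : Type) [Field K] {n : ℕ} (G : SimpleGraph (Fin n)) : ℕ :=
  ringDepth (PolyS K n ⧸ beIdeal K G)
    (Ideal.map (Ideal.Quotient.mk (beIdeal K G))
      (Ideal.span (Set.range (X : (Fin n ⊕ Fin n) → PolyS K n))))

end

/-!
Let `φ` be the substitution `x_v, y_v ↦ 0`. Every `g` differs from `φ g` by an element of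
`(x_v, y_v)`, and the new binomials `f_uw` of `J_{G_v}` (with `u, w ∈ N_G(v)`) satisfy
`x_v f_uw = x_u f_vw - x_w f_vu` and similarly for `y_v`, so `(x_v, y_v) J_{G_v} ⊆ J_G`. Writing a
`g ∈ J_{G_v}` in terms of generators then shows `g - φ g ∈ J_G`. If moreover
`g ∈ (x_v, y_v) + J_{G-v}`, then `φ g ∈ J_{G-v} ⊆ J_G`, hence `g ∈ J_G`.
-/

theorem MvPolynomial.sub_aeval_mem {R σ : Type*} [CommRing R] {I : Ideal (MvPolynomial σ R)}
    {f : σ → MvPolynomial σ R} (hf : ∀ s, X s - f s ∈ I) (p : MvPolynomial σ R) :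
    p - aeval f p ∈ I := by
  have hcomp : (Ideal.Quotient.mkₐ R I).comp (aeval f) = Ideal.Quotient.mkₐ R I :=
    algHom_ext fun s => by simpa [Ideal.Quotient.eq] using I.neg_mem_iff.mpr (hf s)
  rw [← Ideal.Quotient.eq]
  exact (DFunLike.congr_fun hcomp p).symm

theorem Ideal.sub_map_mem_of_mem_span {R : Type*} [CommRing R] (φ : R →+* R) {s : Set R}
    {m J : Ideal R} (hφ : ∀ a, a - φ a ∈ m) (hm : m * Ideal.span s ≤ J)
    (hs : ∀ f ∈ s, f - φ f ∈ J) {g : R} (hg : g ∈ Ideal.span s) : g - φ g ∈ J := by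
  induction hg using Submodule.span_induction with
  | mem f hf => exact hs f hf
  | zero => simp
  | add f g _ _ hf hg => simpa [add_sub_add_comm] using J.add_mem hf hg
  | smul a f hf hfJ =>
    have hsplit : a * f - φ (a * f) = (a - φ a) * f + φ a * (f - φ f) := by rw [map_mul]; ring
    rw [smul_eq_mul, hsplit]
    exact J.add_mem (hm (Ideal.mul_mem_mul (hφ a) hf)) (J.mul_mem_left _ hfJ)

theorem SimpleGraph.completeNeighborhood_le {V : Type} (G : SimpleGraph V) (v : V) :
    G ≤ completeNeighborhood G v :=
  fun _ _ => Or.inl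

theorem SimpleGraph.Adj.of_completeNeighborhood {V : Type} {G : SimpleGraph V} {v u w : V}
    (h : (completeNeighborhood G v).Adj u w) (hv : u = v ∨ w = v) : G.Adj u w := by
  rcases h with h | ⟨-, hu, hw⟩
  · exact h
  · rcases hv with rfl | rfl
    exacts [absurd hu G.irrefl, absurd hw G.irrefl]

section BinomialEdgeIdeal

variable {K : Type} [Field K] {n : ℕ}

theorem relIdeal_mono {r r' : Fin n → Fin n → Prop} (h : ∀ i j, r i j → r' i j) :
    relIdeal K r ≤ relIdeal K r' :=
  Ideal.span_mono fun _ ⟨i, j, hij, hg⟩ => ⟨i, j, h i j hij, hg⟩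

theorem fij_mem_relIdeal {r : Fin n → Fin n → Prop} {i j : Fin n} (h : r i j) :
    fij i j ∈ relIdeal K r :=
  Ideal.subset_span ⟨i, j, h, rfl⟩

noncomputable abbrev vertexIdeal (K : Type) [Field K] {n : ℕ} (v : Fin n) : Ideal (PolyS K n) :=
  Ideal.span {xv v, yv v}

theorem xv_mem_vertexIdeal (v : Fin n) : xv v ∈ vertexIdeal K v :=
  Ideal.subset_span (Or.inl rfl)

theorem yv_mem_vertexIdeal (v : Fin n) : yv v ∈ vertexIdeal K v :=
  Ideal.subset_span (Or.inr rfl)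

theorem fij_mem_vertexIdeal_of_eq {v i j : Fin n} (h : i = v ∨ j = v) :
    fij i j ∈ vertexIdeal K v := by
  unfold fij
  rcases h with rfl | rfl
  · exact sub_mem (Ideal.mul_mem_right _ _ (xv_mem_vertexIdeal i))
      (Ideal.mul_mem_left _ _ (yv_mem_vertexIdeal i))
  · exact sub_mem (Ideal.mul_mem_left _ _ (yv_mem_vertexIdeal j))
      (Ideal.mul_mem_right _ _ (xv_mem_vertexIdeal j))

theorem beIdeal_le_vertexIdeal_add (G : SimpleGraph (Fin n)) (v : Fin n) :
    beIdeal K G ≤ vertexIdeal K v + relIdeal K (fun i j => G.Adj i j ∧ i ≠ v ∧ j ≠ v) := by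
  refine Ideal.span_le.mpr ?_
  rintro _ ⟨i, j, h, rfl⟩
  by_cases hv : i = v ∨ j = v
  · exact Ideal.mem_sup_left (fij_mem_vertexIdeal_of_eq hv)
  · obtain ⟨hi, hj⟩ := not_or.mp hv
    exact Ideal.mem_sup_right (fij_mem_relIdeal ⟨h, hi, hj⟩)

theorem xv_mul_fij (v i j : Fin n) :
    xv (K := K) v * fij i j = xv i * fij v j - xv j * fij v i := by
  unfold fij; ring

theorem yv_mul_fij (v i j : Fin n) :
    yv (K := K) v * fij i j = yv i * fij v j - yv j * fij v i := by
  unfold fij; ring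

theorem vertexIdeal_mul_beIdeal_completeNeighborhood_le (G : SimpleGraph (Fin n)) (v : Fin n) :
    vertexIdeal K v * beIdeal K (completeNeighborhood G v) ≤ beIdeal K G := by
  rw [beIdeal, relIdeal, Ideal.span_mul_span]
  refine Ideal.span_le.mpr ?_
  rintro _ ⟨a, ha, _, ⟨i, j, h, rfl⟩, rfl⟩
  dsimp only
  rcases h with h | ⟨-, hi, hj⟩
  · exact Ideal.mul_mem_left _ _ (fij_mem_relIdeal h)
  · rcases ha with rfl | rfl <;> [rw [xv_mul_fij]; rw [yv_mul_fij]] <;>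
      exact sub_mem (Ideal.mul_mem_left _ _ (fij_mem_relIdeal hj))
        (Ideal.mul_mem_left _ _ (fij_mem_relIdeal hi))

noncomputable def killVertex (K : Type) [Field K] {n : ℕ} (v : Fin n) :
    PolyS K n →ₐ[K] PolyS K n :=
  aeval fun s => if s = Sum.inl v ∨ s = Sum.inr v then 0 else X s

theorem killVertex_xv (v i : Fin n) : killVertex K v (xv i) = if i = v then 0 else xv i := by
  simp [killVertex, xv]

theorem killVertex_yv (v i : Fin n) : killVertex K v (yv i) = if i = v then 0 else yv i := by
  simp [killVertex, yv]

theorem killVertex_fij (v i j : Fin n) :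
    killVertex K v (fij i j) = if i = v ∨ j = v then 0 else fij i j := by
  by_cases hi : i = v <;> by_cases hj : j = v <;>
    simp [fij, killVertex_xv, killVertex_yv, hi, hj]

theorem sub_killVertex_mem_vertexIdeal (v : Fin n) (p : PolyS K n) :
    p - killVertex K v p ∈ vertexIdeal K v := by
  refine MvPolynomial.sub_aeval_mem (fun s => ?_) p
  split_ifs with hs
  · rw [sub_zero]
    rcases hs with rfl | rfl
    exacts [xv_mem_vertexIdeal v, yv_mem_vertexIdeal v]
  · rw [sub_self]
    exact zero_mem _

theorem map_killVertex_le (G : SimpleGraph (Fin n)) (v : Fin n) :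
    Ideal.map (killVertex K v)
        (vertexIdeal K v + relIdeal K (fun i j => G.Adj i j ∧ i ≠ v ∧ j ≠ v)) ≤
      relIdeal K (fun i j => G.Adj i j ∧ i ≠ v ∧ j ≠ v) := by
  rw [Ideal.add_eq_sup, Ideal.map_sup, relIdeal, Ideal.map_span, Ideal.map_span]
  refine sup_le (Ideal.span_le.mpr ?_) (Ideal.span_le.mpr ?_)
  · rintro _ ⟨a, ha, rfl⟩
    rcases ha with rfl | rfl <;> simp [killVertex_xv, killVertex_yv]
  · rintro _ ⟨_, ⟨i, j, hij, rfl⟩, rfl⟩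
    rw [killVertex_fij, if_neg (by tauto)]
    exact fij_mem_relIdeal hij

theorem fij_sub_killVertex_mem {G : SimpleGraph (Fin n)} {v i j : Fin n}
    (h : (completeNeighborhood G v).Adj i j) :
    fij i j - killVertex K v (fij i j) ∈ beIdeal K G := by
  rw [killVertex_fij]
  split_ifs with hv
  · rw [sub_zero]
    exact fij_mem_relIdeal (h.of_completeNeighborhood hv)
  · rw [sub_self]
    exact zero_mem _

end BinomialEdgeIdeal

/-- `J_G = J_{G_v} ∩ ((x_v, y_v) + J_{G - v})`. -/
theorem stmt11 (K : Type) [Field K] {n : ℕ} (G : SimpleGraph (Fin n)) (v : Fin n) :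
    beIdeal K G =
      beIdeal K (completeNeighborhood G v) ⊓
        (Ideal.span {xv v, yv v} +
          relIdeal K (fun i j => G.Adj i j ∧ i ≠ v ∧ j ≠ v)) := by
  refine le_antisymm (le_inf (relIdeal_mono fun _ _ h => G.completeNeighborhood_le v h)
    (beIdeal_le_vertexIdeal_add G v)) ?_
  rintro g ⟨hGv, hsplit⟩
  have hsub : g - killVertex K v g ∈ beIdeal K G :=
    Ideal.sub_map_mem_of_mem_span (killVertex K v).toRingHom (sub_killVertex_mem_vertexIdeal v)
      (vertexIdeal_mul_beIdeal_completeNeighborhood_le G v)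
      (fun _ ⟨_, _, h, hf⟩ => hf ▸ fij_sub_killVertex_mem h) hGv
  have hkill : killVertex K v g ∈ beIdeal K G :=
    relIdeal_mono (fun _ _ h => h.1) (map_killVertex_le G v (Ideal.mem_map_of_mem _ hsplit))
  simpa using add_mem hsub hkill
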